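/- Let $0<\alpha\le\infty$, let $E_1$ and $E_2$ be quasi Banach ideal spaces on $(0,\alpha)$, and let $0<\theta<1$. If $E_1$ and $E_2$ are continuously embedded in $L_0(0,\alpha)$ (with the topology of convergence in measure), then the Calderón space $E_1^{1-\theta}E_2^{\theta}$ is a quasi Banach ideal space on $(0,\alpha)$; in particular it is complete with respect to its quasi-norm. -/

import Mathlib

open MeasureTheory Filter Set Topology
open scoped ENNReal NNReal BigOperators

noncomputable section

/-! ## Function space framework: symmetric quasi Banach spaces on `(0, α)` -/

/-- The Lebesgue measure restricted to the interval `(0, α)`, `α ∈ (0, ∞]`. -/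
def mIoo (α : ℝ≥0∞) : Measure ℝ :=
  MeasureTheory.volume.restrict {t : ℝ | 0 < t ∧ ENNReal.ofReal t < α}

/-- The decreasing rearrangement `μ_t(f)` of a function `f` with respect to the measure `m`. -/
def drear (m : Measure ℝ) (f : ℝ → ℂ) (t : ℝ) : ℝ :=
  sInf {s : ℝ | 0 < s ∧ m {u : ℝ | s < ‖f u‖} ≤ ENNReal.ofReal t}

/-- A quasi Banach ideal space of (complex valued) measurable functions over the measure `m`:
a complete quasi-normed space of measurable functions satisfying the ideal property. -/
structure QBIdealSpace (m : Measure ℝ) where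
  mem : (ℝ → ℂ) → Prop
  nrm : (ℝ → ℂ) → ℝ
  qc : ℝ
  one_le_qc : 1 ≤ qc
  measurable_of_mem : ∀ f, mem f → Measurable f
  zero_mem : mem 0
  add_mem : ∀ f g, mem f → mem g → mem (f + g)
  smul_mem : ∀ (c : ℂ) f, mem f → mem (c • f)
  nrm_nonneg : ∀ f, 0 ≤ nrm f
  nrm_smul : ∀ (c : ℂ) f, mem f → nrm (c • f) = ‖c‖ * nrm f
  nrm_add_le : ∀ f g, mem f → mem g → nrm (f + g) ≤ qc * (nrm f + nrm g)
  nrm_eq_zero_iff : ∀ f, mem f → (nrm f = 0 ↔ f =ᵐ[m] 0)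
  ideal : ∀ f g, mem g → Measurable f →
    (∀ᵐ t ∂m, ‖f t‖ ≤ ‖g t‖) → mem f ∧ nrm f ≤ nrm g
  complete : ∀ u : ℕ → ℝ → ℂ, (∀ n, mem (u n)) →
    (∀ ε : ℝ, 0 < ε → ∃ N : ℕ, ∀ i j, N ≤ i → N ≤ j → nrm (u i - u j) < ε) →
    ∃ f, mem f ∧ Tendsto (fun n => nrm (u n - f)) atTop (nhds 0)

/-- `E` is a symmetric (rearrangement invariant) space: if `g` is measurable and
`μ(g) ≤ μ(f)` for some `f ∈ E`, then `g ∈ E` with `‖g‖ ≤ ‖f‖`. -/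
def IsSymmetricQB (m : Measure ℝ) (E : QBIdealSpace m) : Prop :=
  ∀ f g, E.mem f → Measurable g → (∀ t, 0 < t → drear m g t ≤ drear m f t) →
    E.mem g ∧ E.nrm g ≤ E.nrm f

/-- `E` is fully symmetric: it is symmetric and moreover closed under
Hardy–Littlewood–Pólya submajorization, with monotonicity of the quasi-norm. -/
def IsFullySymmetricQB (m : Measure ℝ) (E : QBIdealSpace m) : Prop :=
  IsSymmetricQB m E ∧
  ∀ f g, E.mem f → Measurable g →
    (∀ t, 0 < t →
      (∫ s in Ioc (0:ℝ) t, drear m g s) ≤ (∫ s in Ioc (0:ℝ) t, drear m f s)) →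
    E.mem g ∧ E.nrm g ≤ E.nrm f

/-- `E` is `s`-convex: `‖(∑ |fᵢ|^s)^{1/s}‖ ≤ C (∑ ‖fᵢ‖^s)^{1/s}` for finite families. -/
def SConvex {m : Measure ℝ} (E : QBIdealSpace m) (s : ℝ) : Prop :=
  ∃ C : ℝ, 0 < C ∧ ∀ (n : ℕ) (f : Fin n → ℝ → ℂ), (∀ i, E.mem (f i)) →
    E.mem (fun t => (((∑ i, ‖f i t‖ ^ s) ^ (1/s) : ℝ) : ℂ)) ∧
    E.nrm (fun t => (((∑ i, ‖f i t‖ ^ s) ^ (1/s) : ℝ) : ℂ)) ≤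
      C * (∑ i, E.nrm (f i) ^ s) ^ (1/s)

/-- The pair `(mem, nrm)` has order continuous norm: for every downward directed net of
nonnegative members decreasing (a.e. pointwise) to `0`, the norms tend to `0`. -/
def OrderContNorm (m : Measure ℝ) (mem : (ℝ → ℂ) → Prop) (nrm : (ℝ → ℂ) → ℝ) : Prop :=
  ∀ (ι : Type) [Preorder ι] [IsDirected ι (· ≤ ·)] [Nonempty ι] (x : ι → ℝ → ℝ),
    (∀ i, mem (fun t => (x i t : ℂ))) →
    (∀ i j, i ≤ j → ∀ t, x j t ≤ x i t) →
    (∀ i t, 0 ≤ x i t) →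
    (∀ᵐ t ∂m, (⨅ i, x i t) = 0) →
    Tendsto (fun i => nrm (fun t => (x i t : ℂ))) atTop (nhds 0)

/-- `E` is separable (equivalently, has order continuous norm): there is a countable set
of members of `E` which is dense in `E` for the quasi-norm. -/
def SeparableQB {m : Measure ℝ} (E : QBIdealSpace m) : Prop :=
  ∃ D : Set (ℝ → ℂ), D.Countable ∧ (∀ g ∈ D, E.mem g) ∧
    ∀ f, E.mem f → ∀ ε : ℝ, 0 < ε → ∃ g ∈ D, E.nrm (f - g) < ε

/-- The dilation operator `(D_a f)(t) = f(at) χ_{(0,α)}(at)`. -/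
def dil (α : ℝ≥0∞) (a : ℝ) (f : ℝ → ℂ) : ℝ → ℂ :=
  fun t => if 0 < a * t ∧ ENNReal.ofReal (a * t) < α then f (a * t) else 0

/-- The upper Boyd index of `E` is `< q`:
there is `0 < q' < q` with `‖D_a f‖ ≤ c a^{-1/q'} ‖f‖` for all `a ≥ 1`. -/
def BoydUpperLT (α : ℝ≥0∞) (E : QBIdealSpace (mIoo α)) (q : ℝ) : Prop :=
  ∃ q' c : ℝ, 0 < q' ∧ q' < q ∧ 0 < c ∧ ∀ a : ℝ, 1 ≤ a → ∀ f, E.mem f →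
    E.mem (dil α a f) ∧ E.nrm (dil α a f) ≤ c * a ^ (-(1/q')) * E.nrm f

/-- The upper Boyd index of `E` is finite. -/
def BoydUpperFinite (α : ℝ≥0∞) (E : QBIdealSpace (mIoo α)) : Prop :=
  ∃ q' c : ℝ, 0 < q' ∧ 0 < c ∧ ∀ a : ℝ, 1 ≤ a → ∀ f, E.mem f →
    E.mem (dil α a f) ∧ E.nrm (dil α a f) ≤ c * a ^ (-(1/q')) * E.nrm f

/-- The lower Boyd index of `E` is `> p`:
there is `p' > p` with `‖D_a f‖ ≤ c a^{-1/p'} ‖f‖` for all `0 < a ≤ 1`. -/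
def BoydLowerGT (α : ℝ≥0∞) (E : QBIdealSpace (mIoo α)) (p : ℝ) : Prop :=
  ∃ p' c : ℝ, p < p' ∧ 0 < c ∧ ∀ a : ℝ, 0 < a → a ≤ 1 → ∀ f, E.mem f →
    E.mem (dil α a f) ∧ E.nrm (dil α a f) ≤ c * a ^ (-(1/p')) * E.nrm f

/-! ## Calderón spaces, pointwise products and convexifications -/

/-- Membership in the Calderón space `E₁^{1-θ} E₂^{θ}`. -/
def calMem (mem1 mem2 : (ℝ → ℂ) → Prop) (θ : ℝ) (x : ℝ → ℂ) : Prop :=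
  Measurable x ∧ ∃ x1 x2, mem1 x1 ∧ mem2 x2 ∧
    ∀ t, ‖x t‖ = ‖x1 t‖ ^ (1 - θ) * ‖x2 t‖ ^ θ

/-- The quasi-norm of the Calderón space `E₁^{1-θ} E₂^{θ}`. -/
def calNrm (mem1 : (ℝ → ℂ) → Prop) (nrm1 : (ℝ → ℂ) → ℝ)
    (mem2 : (ℝ → ℂ) → Prop) (nrm2 : (ℝ → ℂ) → ℝ) (θ : ℝ) (x : ℝ → ℂ) : ℝ :=
  sInf {c : ℝ | ∃ x1 x2, mem1 x1 ∧ mem2 x2 ∧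
    (∀ t, ‖x t‖ = ‖x1 t‖ ^ (1 - θ) * ‖x2 t‖ ^ θ) ∧
    c = nrm1 x1 ^ (1 - θ) * nrm2 x2 ^ θ}

/-- Membership in the pointwise product space `X₁ ⊙ X₂`. -/
def prodMem {X : Type*} [Mul X] (mem1 mem2 : X → Prop) (x : X) : Prop :=
  ∃ x1 x2, mem1 x1 ∧ mem2 x2 ∧ x = x1 * x2

/-- The quasi-norm of the product space `X₁ ⊙ X₂`. -/
def prodNrm {X : Type*} [Mul X] (mem1 : X → Prop) (nrm1 : X → ℝ)
    (mem2 : X → Prop) (nrm2 : X → ℝ) (x : X) : ℝ :=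
  sInf {c : ℝ | ∃ x1 x2, mem1 x1 ∧ mem2 x2 ∧ x = x1 * x2 ∧ c = nrm1 x1 * nrm2 x2}

/-- Membership in the `p`-convexification `E^{(p)} = {f : |f|^p ∈ E}`. -/
def convMem (mem : (ℝ → ℂ) → Prop) (p : ℝ) (f : ℝ → ℂ) : Prop :=
  Measurable f ∧ mem (fun t => ((‖f t‖ ^ p : ℝ) : ℂ))

/-- The quasi-norm of the `p`-convexification, `‖f‖_{E^{(p)}} = ‖|f|^p‖_E^{1/p}`. -/
def convNrm (nrm : (ℝ → ℂ) → ℝ) (p : ℝ) (f : ℝ → ℂ) : ℝ :=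
  nrm (fun t => ((‖f t‖ ^ p : ℝ) : ℂ)) ^ (1 / p)

/-! ## Complex interpolation of couples of quasi Banach spaces -/

/-- The open strip `0 < Re z < 1`. -/
def stripS : Set ℂ := {z : ℂ | 0 < z.re ∧ z.re < 1}

/-- The closed strip `0 ≤ Re z ≤ 1`. -/
def stripC : Set ℂ := {z : ℂ | 0 ≤ z.re ∧ z.re ≤ 1}

/-- The complex interpolation quasi-norm at `θ` of the couple `(X₀, X₁)`, computed via the
space `𝓕₀` of finite sums `f(z) = ∑ gₖ(z) vₖ` with `gₖ` analytic on the strip, continuous and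
bounded on its closure, and `vₖ ∈ X₀ ∩ X₁`. -/
def interpNrm {X : Type*} [AddCommGroup X] [Module ℂ X]
    (mem0 : X → Prop) (nrm0 : X → ℝ) (mem1 : X → Prop) (nrm1 : X → ℝ)
    (θ : ℝ) (x : X) : ℝ :=
  sInf {c : ℝ | ∃ (n : ℕ) (g : Fin n → ℂ → ℂ) (v : Fin n → X),
    (∀ k, DifferentiableOn ℂ (g k) stripS) ∧
    (∀ k, ContinuousOn (g k) stripC) ∧
    (∀ k, ∃ M : ℝ, ∀ z ∈ stripC, ‖g k z‖ ≤ M) ∧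
    (∀ k, mem0 (v k) ∧ mem1 (v k)) ∧
    (∑ k, g k ((θ : ℂ)) • v k) = x ∧
    c = max (⨆ t : ℝ, nrm0 (∑ k, g k (Complex.I * (t : ℂ)) • v k))
            (⨆ t : ℝ, nrm1 (∑ k, g k (1 + Complex.I * (t : ℂ)) • v k))}

/-- `(X₀, X₁)_θ = E` with constants `A, B`: `X₀ ∩ X₁ ⊆ E`; on `X₀ ∩ X₁` the interpolation
quasi-norm satisfies `A ‖x‖_E ≤ ‖x‖_θ ≤ B ‖x‖_E`; and `X₀ ∩ X₁` is dense in `E` — i.e. `E` is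
(isomorphic to) the completion of `(X₀ ∩ X₁, ‖·‖_θ)`. -/
def ComplexInterpEq {X : Type*} [AddCommGroup X] [Module ℂ X]
    (mem0 : X → Prop) (nrm0 : X → ℝ) (mem1 : X → Prop) (nrm1 : X → ℝ)
    (memE : X → Prop) (nrmE : X → ℝ) (θ A B : ℝ) : Prop :=
  (∀ x, mem0 x → mem1 x → memE x) ∧
  (∀ x, mem0 x → mem1 x →
      A * nrmE x ≤ interpNrm mem0 nrm0 mem1 nrm1 θ x ∧
      interpNrm mem0 nrm0 mem1 nrm1 θ x ≤ B * nrmE x) ∧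
  (∀ x, memE x → ∀ ε : ℝ, 0 < ε → ∃ y, mem0 y ∧ mem1 y ∧ memE (x - y) ∧ nrmE (x - y) < ε)

/-! ## Real interpolation: `K`-functional -/

/-- The Peetre `K`-functional of the couple `(X₀, X₁)`. -/
def Kfun {X : Type*} [AddCommGroup X] (mem0 : X → Prop) (nrm0 : X → ℝ)
    (mem1 : X → Prop) (nrm1 : X → ℝ) (t : ℝ) (x : X) : ℝ :=
  sInf {c : ℝ | ∃ x0 x1, mem0 x0 ∧ mem1 x1 ∧ x = x0 + x1 ∧ c = nrm0 x0 + t * nrm1 x1}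

/-- Membership in the sum space `X₀ + X₁`. -/
def sumMem {X : Type*} [AddCommGroup X] (mem0 mem1 : X → Prop) (x : X) : Prop :=
  ∃ x0 x1, mem0 x0 ∧ mem1 x1 ∧ x = x0 + x1

/-- The real interpolation quasi-norm `‖x‖_{θ,p}` (ℝ≥0∞-valued), with the usual supremum
modification for `p = ∞`. -/
def realNrmE {X : Type*} [AddCommGroup X] (mem0 : X → Prop) (nrm0 : X → ℝ)
    (mem1 : X → Prop) (nrm1 : X → ℝ) (θ : ℝ) (p : ℝ≥0∞) (x : X) : ℝ≥0∞ :=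
  if p = ⊤ then ⨆ t ∈ Ioi (0:ℝ), ENNReal.ofReal (t ^ (-θ) * Kfun mem0 nrm0 mem1 nrm1 t x)
  else (∫⁻ t in Ioi (0:ℝ),
    ENNReal.ofReal ((t ^ (-θ) * Kfun mem0 nrm0 mem1 nrm1 t x) ^ p.toReal / t)) ^ (1 / p.toReal)

/-- Membership in the real interpolation space `(X₀, X₁)_{θ,p}`. -/
def realMem {X : Type*} [AddCommGroup X] (mem0 : X → Prop) (nrm0 : X → ℝ)
    (mem1 : X → Prop) (nrm1 : X → ℝ) (θ : ℝ) (p : ℝ≥0∞) (x : X) : Prop :=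
  sumMem mem0 mem1 x ∧ realNrmE mem0 nrm0 mem1 nrm1 θ p x < ⊤

/-- The (real valued) real interpolation quasi-norm. -/
def realNrm {X : Type*} [AddCommGroup X] (mem0 : X → Prop) (nrm0 : X → ℝ)
    (mem1 : X → Prop) (nrm1 : X → ℝ) (θ : ℝ) (p : ℝ≥0∞) (x : X) : ℝ :=
  (realNrmE mem0 nrm0 mem1 nrm1 θ p x).toReal

/-! ## Noncommutative setting: semifinite von Neumann algebras, `τ`-measurable operators -/

/-- An abstract model of a semifinite von Neumann algebra `M` with a normal semifinite faithful
trace `τ` with `τ(1) = traceOne`, together with its `*`-algebra `L` of `τ`-measurable operators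
(in which `M` sits as the subset `M`), the generalized singular value function `μ`, and the
σ-weak (w*-) topology on `L` (restricting to that of `M`). -/
structure NCSpace where
  L : Type
  Lring : Ring L
  Lalg : Algebra ℂ L
  Lstar : StarRing L
  Ltop : TopologicalSpace L
  M : Set L
  one_mem : (1 : L) ∈ M
  add_mem : ∀ x y, x ∈ M → y ∈ M → x + y ∈ M
  mul_mem : ∀ x y, x ∈ M → y ∈ M → x * y ∈ M
  smul_mem : ∀ (c : ℂ) x, x ∈ M → c • x ∈ M
  star_mem : ∀ x, x ∈ M → star x ∈ M
  traceOne : ℝ≥0∞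
  traceOne_pos : 0 < traceOne
  mu : L → ℝ → ℝ
  mu_nonneg : ∀ x t, 0 ≤ mu x t
  mu_antitone : ∀ x, AntitoneOn (mu x) (Ioi (0:ℝ))
  mu_measurable : ∀ x, Measurable (mu x)
  mu_vanish : ∀ x t, traceOne ≤ ENNReal.ofReal t → mu x t = 0

attribute [instance] NCSpace.Lring NCSpace.Lalg NCSpace.Lstar NCSpace.Ltop

/-- The generalized singular value function of `x`, as a (complex valued) function on `(0,∞)`. -/
def muF (V : NCSpace) (x : V.L) : ℝ → ℂ := fun t => ((V.mu x t : ℝ) : ℂ)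

/-- Membership in the noncommutative symmetric space `E(M) = {x : μ(x) ∈ E}`. -/
def memEM (V : NCSpace) (E : QBIdealSpace (mIoo V.traceOne)) (x : V.L) : Prop :=
  E.mem (muF V x)

/-- The quasi-norm of `E(M)`: `‖x‖_{E(M)} = ‖μ(x)‖_E`. -/
def nrmEM (V : NCSpace) (E : QBIdealSpace (mIoo V.traceOne)) (x : V.L) : ℝ :=
  E.nrm (muF V x)

/-- A subdiagonal algebra `𝒜` of `M` with respect to a (normal faithful `τ`-invariant)
conditional expectation `ℰ` onto the diagonal `𝒟 = 𝒜 ∩ 𝒜*`: a w*-closed subalgebra of `M`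
such that `𝒜 + 𝒜*` is w*-dense in `M` and `ℰ` is multiplicative on `𝒜`. -/
structure SubdiagonalAlg (V : NCSpace) where
  A : Set V.L
  subset_M : A ⊆ V.M
  one_mem : (1 : V.L) ∈ A
  add_mem : ∀ x y, x ∈ A → y ∈ A → x + y ∈ A
  mul_mem : ∀ x y, x ∈ A → y ∈ A → x * y ∈ A
  smul_mem : ∀ (c : ℂ) x, x ∈ A → c • x ∈ A
  isClosed : IsClosed A
  wdense : ∀ x ∈ V.M, x ∈ closure {y : V.L | ∃ a ∈ A, ∃ b ∈ A, y = a + star b}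
  D : Set V.L
  D_def : D = {x : V.L | x ∈ A ∧ star x ∈ A}
  ce : V.L →ₗ[ℂ] V.L
  ce_into_D : ∀ x ∈ V.M, ce x ∈ D
  ce_mult : ∀ a b, a ∈ A → b ∈ A → ce (a * b) = ce a * ce b
  ce_idem : ∀ d ∈ D, ce d = d

/-- Membership in the noncommutative Hardy space associated with a (quasi-normed) subspace of
`L₀(M)` given by `(mem, nrm)`: the closure of `𝒜 ∩ E(M)` in `E(M)`. -/
def memEA (V : NCSpace) (S : SubdiagonalAlg V) (mem : V.L → Prop) (nrm : V.L → ℝ)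
    (x : V.L) : Prop :=
  mem x ∧ ∀ ε : ℝ, 0 < ε → ∃ a ∈ S.A, mem a ∧ nrm (x - a) < ε

/-- Membership in the noncommutative `L_p`-space: `∫ μ_t(x)^p dt < ∞`. -/
def LpMem (V : NCSpace) (p : ℝ) (x : V.L) : Prop :=
  (∫⁻ t in Ioi (0:ℝ), ENNReal.ofReal (V.mu x t ^ p)) < ⊤

/-- The noncommutative `L_p` quasi-norm. -/
def LpNrm (V : NCSpace) (p : ℝ) (x : V.L) : ℝ :=
  (∫ t in Ioi (0:ℝ), V.mu x t ^ p) ^ (1 / p)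

/-- Membership in the noncommutative Hardy space `H_p(𝒜)`:
the closure of `𝒜 ∩ L_p(M)` in `L_p(M)`. -/
def HpMem (V : NCSpace) (S : SubdiagonalAlg V) (p : ℝ) (x : V.L) : Prop :=
  LpMem V p x ∧ ∀ ε : ℝ, 0 < ε → ∃ a ∈ S.A, LpMem V p a ∧ LpNrm V p (x - a) < ε

/-!
The quasi-norm axioms and the ideal property all come from one construction: if
`|f| ≤ |g₁| ^ (1 - θ) |g₂| ^ θ` a.e. with `gⱼ ∈ Eⱼ`, then `f` factorizes exactly as
`|f| = |x₁| ^ (1 - θ) |x₂| ^ θ` with `|xⱼ| ≤ |gⱼ|` a.e. After rescaling near-optimal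
factorizations so that both factors have norm close to the Calderón quasi-norm, Hölder's inequality
`|f + g| ≤ (|f₁| + |g₁|) ^ (1 - θ) (|f₂| + |g₂|) ^ θ` gives the quasi-triangle inequality with
constant `max C₁ C₂`.

The embeddings `Eⱼ ↪ L₀` are needed twice. If the quasi-norm of `f` vanishes, `f` has factors of
norm tending to `0`, which tend to `0` a.e. along a subsequence, so `f = 0` a.e. For completeness,
factor the increments of a fast Cauchy sequence as `(aₖ, bₖ)`: the series `∑ |aₖ|`, `∑ |bₖ|`
converge in `E₁`, `E₂` to functions dominating their partial sums a.e., so the sequence converges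
a.e., and Hölder's inequality dominates the tails of the limit in the Calderón quasi-norm.
-/

section RealInequalities

variable {θ : ℝ}

lemma rpow_one_sub_mul_rpow_self {a : ℝ} (ha : 0 ≤ a) : a ^ (1 - θ) * a ^ θ = a := by
  rw [← Real.rpow_add' ha (by simp), sub_add_cancel, Real.rpow_one]

lemma mul_rpow_one_sub_mul_mul_rpow {c a b : ℝ} (hc : 0 ≤ c) (ha : 0 ≤ a) (hb : 0 ≤ b) :
    (c * a) ^ (1 - θ) * (c * b) ^ θ = c * (a ^ (1 - θ) * b ^ θ) := by
  rw [Real.mul_rpow hc ha, Real.mul_rpow hc hb]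
  linear_combination (a ^ (1 - θ) * b ^ θ) * rpow_one_sub_mul_rpow_self (θ := θ) hc

lemma rpow_one_sub_mul_rpow_le_of_le (hθ0 : 0 < θ) (hθ1 : θ < 1) {a b a' b' : ℝ} (ha : 0 ≤ a)
    (hb : 0 ≤ b) (haa' : a ≤ a') (hbb' : b ≤ b') :
    a ^ (1 - θ) * b ^ θ ≤ a' ^ (1 - θ) * b' ^ θ :=
  mul_le_mul (Real.rpow_le_rpow ha haa' (by linarith)) (Real.rpow_le_rpow hb hbb' hθ0.le)
    (Real.rpow_nonneg hb _) (Real.rpow_nonneg (ha.trans haa') _)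

lemma sum_rpow_one_sub_mul_rpow_le {ι : Type*} (s : Finset ι) (hθ0 : 0 < θ) (hθ1 : θ < 1)
    {a b : ι → ℝ} (ha : ∀ i, 0 ≤ a i) (hb : ∀ i, 0 ≤ b i) :
    ∑ i ∈ s, a i ^ (1 - θ) * b i ^ θ ≤ (∑ i ∈ s, a i) ^ (1 - θ) * (∑ i ∈ s, b i) ^ θ := by
  have h := Real.inner_le_Lp_mul_Lq_of_nonneg s (Real.HolderConjugate.one_sub_inv_inv hθ0 hθ1)
    (fun i _ => Real.rpow_nonneg (ha i) (1 - θ)) (fun i _ => Real.rpow_nonneg (hb i) θ)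
  simpa only [one_div, inv_inv, Real.rpow_rpow_inv (ha _) (sub_pos.2 hθ1).ne',
    Real.rpow_rpow_inv (hb _) hθ0.ne'] using h

lemma rpow_one_sub_mul_rpow_add_le (hθ0 : 0 < θ) (hθ1 : θ < 1) {a b c d : ℝ} (ha : 0 ≤ a)
    (hb : 0 ≤ b) (hc : 0 ≤ c) (hd : 0 ≤ d) :
    a ^ (1 - θ) * b ^ θ + c ^ (1 - θ) * d ^ θ ≤ (a + c) ^ (1 - θ) * (b + d) ^ θ := by
  simpa using sum_rpow_one_sub_mul_rpow_le Finset.univ hθ0 hθ1 (a := ![a, c]) (b := ![b, d])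
    (by simp [Fin.forall_fin_two, ha, hc]) (by simp [Fin.forall_fin_two, hb, hd])

/-- Perturbing `a, b` to `a + η, b + η` makes both positive, and the rescaling by
`c / (a + η), c / (b + η)` with `c = (a + η) ^ (1 - θ) * (b + η) ^ θ` balances them. -/
lemma exists_rescale_le (hθ0 : 0 < θ) (hθ1 : θ < 1) {a b s : ℝ} (ha : 0 ≤ a) (hb : 0 ≤ b)
    (h : a ^ (1 - θ) * b ^ θ < s) :
    ∃ γ δ : ℝ, 0 < γ ∧ 0 < δ ∧ γ ^ (1 - θ) * δ ^ θ = 1 ∧ γ * a ≤ s ∧ δ * b ≤ s := by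
  have hcont : ContinuousAt (fun η : ℝ => (a + η) ^ (1 - θ) * (b + η) ^ θ) 0 := by
    have h1 : 0 ≤ 1 - θ := by linarith
    fun_prop (disch := first | exact Or.inr h1 | exact Or.inr hθ0.le)
  obtain ⟨η, hlt, hη : 0 < η⟩ := ((hcont.eventually (gt_mem_nhds (by simpa using h))).filter_mono
    nhdsWithin_le_nhds |>.and (self_mem_nhdsWithin (s := Ioi 0))).exists
  have ha' : 0 < a + η := by linarith
  have hb' : 0 < b + η := by linarith
  set c := (a + η) ^ (1 - θ) * (b + η) ^ θ
  have hc : 0 < c := by positivity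
  refine ⟨c / (a + η), c / (b + η), by positivity, by positivity, ?_, ?_, ?_⟩
  · rw [Real.div_rpow hc.le ha'.le, Real.div_rpow hc.le hb'.le, div_mul_div_comm,
      rpow_one_sub_mul_rpow_self hc.le, div_self hc.ne']
  · calc c / (a + η) * a ≤ c / (a + η) * (a + η) := by gcongr; linarith
      _ ≤ s := by rw [div_mul_cancel₀ _ ha'.ne']; exact hlt.le
  · calc c / (b + η) * b ≤ c / (b + η) * (b + η) := by gcongr; linarith
      _ ≤ s := by rw [div_mul_cancel₀ _ hb'.ne']; exact hlt.le

lemma div_mul_rpow_one_sub_mul_div_mul_rpow {y a b : ℝ} (hy : 0 ≤ y) (ha : 0 ≤ a) (hb : 0 ≤ b)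
    (h : y ≤ a ^ (1 - θ) * b ^ θ) :
    (y / (a ^ (1 - θ) * b ^ θ) * a) ^ (1 - θ) * (y / (a ^ (1 - θ) * b ^ θ) * b) ^ θ = y := by
  rw [mul_rpow_one_sub_mul_mul_rpow (div_nonneg hy (by positivity)) ha hb]
  rcases (show 0 ≤ a ^ (1 - θ) * b ^ θ by positivity).eq_or_lt with hD | hD
  · rw [← hD] at h ⊢; simp [le_antisymm h hy]
  · exact div_mul_cancel₀ y hD.ne'

end RealInequalities

lemma exists_seq_tendsto_ae_of_tendstoInMeasure_pair {α E : Type*} [MeasurableSpace α]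
    {μ : Measure α} [PseudoEMetricSpace E] {u v : ℕ → α → E} {g h : α → E}
    (hu : TendstoInMeasure μ u atTop g) (hv : TendstoInMeasure μ v atTop h) :
    ∃ ns : ℕ → ℕ, StrictMono ns ∧ ∀ᵐ x ∂μ,
      Tendsto (fun i => u (ns i) x) atTop (𝓝 (g x)) ∧
        Tendsto (fun i => v (ns i) x) atTop (𝓝 (h x)) := by
  obtain ⟨ns, hns, hu_ae⟩ := hu.exists_seq_tendsto_ae
  have hv' : TendstoInMeasure μ (fun i => v (ns i)) atTop h := fun ε hε =>
    (hv ε hε).comp hns.tendsto_atTop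
  obtain ⟨ms, hms, hv_ae⟩ := hv'.exists_seq_tendsto_ae
  refine ⟨ns ∘ ms, hns.comp hms, ?_⟩
  filter_upwards [hu_ae, hv_ae] with x hux hvx
  exact ⟨hux.comp hms.tendsto_atTop, hvx⟩

lemma exists_measurable_limit_of_sum_norm_sub_le {α E : Type*} [MeasurableSpace α]
    {μ : Measure α} [NormedAddCommGroup E] [CompleteSpace E] [MeasurableSpace E] [BorelSpace E]
    {v : ℕ → α → E} (hv : ∀ n, Measurable (v n)) {H : ℕ → α → ℝ}
    (hH : ∀ᵐ x ∂μ, ∀ N n, ∑ k ∈ Finset.range n, ‖v (N + k + 1) x - v (N + k) x‖ ≤ H N x) :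
    ∃ f, Measurable f ∧ ∀ N, ∀ᵐ x ∂μ, ‖f x - v N x‖ ≤ H N x := by
  have htel : ∀ x N n,
      ∑ k ∈ Finset.range n, (v (N + k + 1) x - v (N + k) x) = v (N + n) x - v N x :=
    fun x N n => Finset.sum_range_sub (fun k => v (N + k) x) n
  have hconv : ∀ᵐ x ∂μ, ∃ l, Tendsto (fun n => v n x) atTop (𝓝 l) := by
    filter_upwards [hH] with x hx
    have hsum : Summable fun k => v (k + 1) x - v k x :=
      Summable.of_norm (summable_of_sum_range_le (fun k => norm_nonneg _)
        fun n => by simpa using hx 0 n)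
    refine ⟨v 0 x + ∑' k, (v (k + 1) x - v k x), ?_⟩
    refine (hsum.hasSum.tendsto_sum_nat.const_add (v 0 x)).congr fun n => ?_
    simpa using congrArg (v 0 x + ·) (htel x 0 n)
  obtain ⟨f, hfm, hf⟩ := measurable_limit_of_tendsto_metrizable_ae
    (fun n => (hv n).aemeasurable) hconv
  refine ⟨f, hfm, fun N => ?_⟩
  filter_upwards [hf, hH] with x hfx hx
  have hlim : Tendsto (fun n => ‖v (N + n) x - v N x‖) atTop (𝓝 ‖f x - v N x‖) :=
    ((hfx.comp ((tendsto_add_atTop_nat N).congr fun n => add_comm n N)).sub_const _).norm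
  refine le_of_tendsto' hlim fun n => ?_
  rw [← htel]
  exact (norm_sum_le _ _).trans (hx N n)

/-- A Cauchy sequence has a subsequence with increments `≤ r ^ k`, and the quasi-triangle
inequality transfers the convergence of that subsequence to the whole sequence. -/
lemma exists_tendsto_of_cauchy {X : Type*} [AddCommGroup X] {mem : X → Prop} {nrm : X → ℝ}
    {Q r : ℝ} (hQ : 0 ≤ Q) (hr0 : 0 < r) (hr1 : r < 1) (hnrm : ∀ x, 0 ≤ nrm x)
    (hsub : ∀ x y, mem x → mem y → mem (x - y))
    (hadd : ∀ x y, mem x → mem y → nrm (x + y) ≤ Q * (nrm x + nrm y))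
    (hfast : ∀ v : ℕ → X, (∀ k, mem (v k)) → (∀ k, nrm (v (k + 1) - v k) ≤ r ^ k) →
      ∃ f, mem f ∧ Tendsto (fun k => nrm (v k - f)) atTop (𝓝 0))
    {u : ℕ → X} (hu : ∀ n, mem (u n))
    (hc : ∀ ε : ℝ, 0 < ε → ∃ N : ℕ, ∀ i j, N ≤ i → N ≤ j → nrm (u i - u j) < ε) :
    ∃ f, mem f ∧ Tendsto (fun n => nrm (u n - f)) atTop (𝓝 0) := by
  choose N hN using fun k => hc (r ^ k) (pow_pos hr0 k)
  obtain ⟨φ, hφ, hφN⟩ := Filter.extraction_forall_of_eventually'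
    (P := fun k n => N k ≤ n) fun k => ⟨N k, fun n hn => hn⟩
  obtain ⟨f, hf, hlim⟩ := hfast (fun k => u (φ k)) (fun k => hu _) fun k =>
    (hN k _ _ ((hφN k).trans (hφ k.lt_succ_self).le) (hφN k)).le
  refine ⟨f, hf, Metric.tendsto_atTop.2 fun ε hε => ?_⟩
  have hbound : Tendsto (fun k => Q * (r ^ k + nrm (u (φ k) - f))) atTop (𝓝 0) := by
    simpa using ((tendsto_pow_atTop_nhds_zero_of_lt_one hr0.le hr1).add hlim).const_mul Q
  obtain ⟨k, hk⟩ := (hbound.eventually (gt_mem_nhds hε)).exists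
  refine ⟨N k, fun n hn => ?_⟩
  rw [Real.dist_0_eq_abs, abs_of_nonneg (hnrm _)]
  calc nrm (u n - f) = nrm ((u n - u (φ k)) + (u (φ k) - f)) := by rw [sub_add_sub_cancel]
    _ ≤ Q * (nrm (u n - u (φ k)) + nrm (u (φ k) - f)) :=
        hadd _ _ (hsub _ _ (hu n) (hu _)) (hsub _ _ (hu _) hf)
    _ ≤ Q * (r ^ k + nrm (u (φ k) - f)) := by
        gcongr; exact (hN k n (φ k) hn (hφN k)).le
    _ < ε := hk

namespace QBIdealSpace

variable {m : Measure ℝ} (E : QBIdealSpace m)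

lemma qc_pos : 0 < E.qc := one_pos.trans_le E.one_le_qc

lemma nrm_zero : E.nrm 0 = 0 := (E.nrm_eq_zero_iff 0 E.zero_mem).2 EventuallyEq.rfl

/-- Continuity of `E ↪ L₀(m)` (convergence in measure), stated sequentially at `0`. -/
def ContinuouslyEmbedsInL0 : Prop :=
  ∀ u : ℕ → ℝ → ℂ, (∀ n, E.mem (u n)) → Tendsto (fun n => E.nrm (u n)) atTop (𝓝 0) →
    TendstoInMeasure m u atTop 0

variable {E}

lemma mem_sub {f g : ℝ → ℂ} (hf : E.mem f) (hg : E.mem g) : E.mem (f - g) := by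
  simpa [sub_eq_add_neg] using E.add_mem f _ hf (E.smul_mem (-1) g hg)

lemma nrm_sub_comm {f g : ℝ → ℂ} (hf : E.mem f) (hg : E.mem g) :
    E.nrm (f - g) = E.nrm (g - f) := by
  simpa using E.nrm_smul (-1) (g - f) (E.mem_sub hg hf)

lemma mem_sum {g : ℕ → ℝ → ℂ} (hg : ∀ k, E.mem (g k)) (s : Finset ℕ) :
    E.mem (∑ k ∈ s, g k) :=
  Finset.sum_induction g E.mem E.add_mem E.zero_mem fun k _ => hg k

lemma mem_norm {g : ℝ → ℂ} (hg : E.mem g) :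
    E.mem (fun t => (‖g t‖ : ℂ)) ∧ E.nrm (fun t => (‖g t‖ : ℂ)) ≤ E.nrm g :=
  E.ideal _ g hg (Complex.measurable_ofReal.comp (E.measurable_of_mem g hg).norm)
    (ae_of_all _ fun t => by simp)

lemma mem_norm_add_norm {f g : ℝ → ℂ} (hf : E.mem f) (hg : E.mem g) :
    E.mem (fun t => ((‖f t‖ + ‖g t‖ : ℝ) : ℂ)) ∧
      E.nrm (fun t => ((‖f t‖ + ‖g t‖ : ℝ) : ℂ)) ≤ E.qc * (E.nrm f + E.nrm g) := by
  obtain ⟨hf', hf'n⟩ := mem_norm hf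
  obtain ⟨hg', hg'n⟩ := mem_norm hg
  have hsplit : (fun t => ((‖f t‖ + ‖g t‖ : ℝ) : ℂ)) =
      (fun t => (‖f t‖ : ℂ)) + (fun t => (‖g t‖ : ℂ)) := by
    funext t; push_cast; rfl
  rw [hsplit]
  refine ⟨E.add_mem _ _ hf' hg', (E.nrm_add_le _ _ hf' hg').trans ?_⟩
  gcongr
  exact E.qc_pos.le

lemma nrm_sum_range_le {g : ℕ → ℝ → ℂ} (hg : ∀ k, E.mem (g k)) (n : ℕ) :
    E.nrm (∑ k ∈ Finset.range n, g k) ≤ ∑ k ∈ Finset.range n, E.qc ^ (k + 1) * E.nrm (g k) := by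
  induction n generalizing g with
  | zero => simp [E.nrm_zero]
  | succ n ih =>
    rw [Finset.sum_range_succ', Finset.sum_range_succ']
    calc E.nrm (∑ k ∈ Finset.range n, g (k + 1) + g 0)
        ≤ E.qc * (E.nrm (∑ k ∈ Finset.range n, g (k + 1)) + E.nrm (g 0)) :=
          E.nrm_add_le _ _ (mem_sum (fun k => hg (k + 1)) _) (hg 0)
      _ ≤ E.qc * (∑ k ∈ Finset.range n, E.qc ^ (k + 1) * E.nrm (g (k + 1)) + E.nrm (g 0)) := by
          gcongr
          · exact E.qc_pos.le
          · exact ih fun k => hg (k + 1)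
      _ = ∑ k ∈ Finset.range n, E.qc ^ (k + 1 + 1) * E.nrm (g (k + 1))
            + E.qc ^ (0 + 1) * E.nrm (g 0) := by
          rw [mul_add, Finset.mul_sum]
          ring_nf

lemma nrm_sum_range_le_of_le_geometric {Q c r : ℝ} (hQ : E.qc ≤ Q) (hr : 0 ≤ r)
    (hQr : Q * r ≤ 1 / 2) {g : ℕ → ℝ → ℂ} (hg : ∀ k, E.mem (g k))
    (hgc : ∀ k, E.nrm (g k) ≤ c * r ^ k) (n : ℕ) :
    E.nrm (∑ k ∈ Finset.range n, g k) ≤ 2 * Q * c := by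
  have hQ0 : 0 < Q := E.qc_pos.trans_le hQ
  have hc : 0 ≤ c := by simpa using (E.nrm_nonneg _).trans (hgc 0)
  calc E.nrm (∑ k ∈ Finset.range n, g k)
      ≤ ∑ k ∈ Finset.range n, E.qc ^ (k + 1) * E.nrm (g k) := nrm_sum_range_le hg n
    _ ≤ ∑ k ∈ Finset.range n, Q * c * (1 / 2) ^ k := by
        refine Finset.sum_le_sum fun k _ => ?_
        calc E.qc ^ (k + 1) * E.nrm (g k) ≤ Q ^ (k + 1) * (c * r ^ k) := by
              gcongr
              exacts [E.nrm_nonneg _, E.qc_pos.le, hgc k]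
          _ = Q * c * (Q * r) ^ k := by ring
          _ ≤ Q * c * (1 / 2) ^ k := by gcongr
    _ = Q * c * ∑ k ∈ Finset.range n, (1 / 2 : ℝ) ^ k := by rw [Finset.mul_sum]
    _ ≤ Q * c * 2 := by gcongr; exact sum_geometric_two_le n
    _ = 2 * Q * c := by ring

lemma nrm_le_of_tendsto {S : ℕ → ℝ → ℂ} {h : ℝ → ℂ} (hS : ∀ n, E.mem (S n)) (hh : E.mem h)
    (hSh : Tendsto (fun n => E.nrm (S n - h)) atTop (𝓝 0)) {B : ℝ} (hB : ∀ n, E.nrm (S n) ≤ B) :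
    E.nrm h ≤ E.qc * B := by
  have hbound : ∀ n, E.nrm h ≤ E.qc * (B + E.nrm (S n - h)) := fun n => by
    calc E.nrm h = E.nrm (S n + (h - S n)) := by rw [add_sub_cancel]
      _ ≤ E.qc * (E.nrm (S n) + E.nrm (h - S n)) := E.nrm_add_le _ _ (hS n) (mem_sub hh (hS n))
      _ ≤ E.qc * (B + E.nrm (S n - h)) := by
          rw [nrm_sub_comm hh (hS n)]
          gcongr
          exacts [E.qc_pos.le, hB n]
  simpa using ge_of_tendsto' ((hSh.const_add B).const_mul E.qc) hbound

lemma exists_tendsto_of_nrm_sub_le_geometric {S : ℕ → ℝ → ℂ} (hS : ∀ n, E.mem (S n)) {C r : ℝ}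
    (hr0 : 0 ≤ r) (hr1 : r < 1) (hSC : ∀ j n, E.nrm (S (j + n) - S j) ≤ C * r ^ j) :
    ∃ h, E.mem h ∧ Tendsto (fun n => E.nrm (S n - h)) atTop (𝓝 0) := by
  refine E.complete S hS fun ε hε => ?_
  obtain ⟨N, hN⟩ := ((tendsto_pow_atTop_nhds_zero_of_lt_one hr0 hr1).const_mul C).eventually
    (gt_mem_nhds (by simpa using hε)) |>.exists_forall_of_atTop
  have key : ∀ i j, N ≤ j → j ≤ i → E.nrm (S i - S j) < ε := fun i j hj hji => by
    obtain ⟨n, rfl⟩ := Nat.exists_eq_add_of_le hji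
    exact (hSC j n).trans_lt (hN j hj)
  refine ⟨N, fun i j hi hj => ?_⟩
  rcases le_total j i with hji | hij
  · exact key i j hj hji
  · rw [nrm_sub_comm (hS i) (hS j)]; exact key j i hi hij

/-- The partial sums of `∑ |a k|` converge in `E`; their limit dominates them a.e. because a
subsequence converges a.e. -/
lemma exists_dominating_of_le_geometric (hE : E.ContinuouslyEmbedsInL0) {Q c r : ℝ}
    (hQ : E.qc ≤ Q) (hr : 0 ≤ r) (hQr : Q * r ≤ 1 / 2) {a : ℕ → ℝ → ℂ}
    (ha : ∀ k, E.mem (a k)) (hac : ∀ k, E.nrm (a k) ≤ c * r ^ k) :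
    ∃ h, E.mem h ∧ E.nrm h ≤ 2 * Q ^ 2 * c ∧
      ∀ᵐ t ∂m, ∀ n, ∑ k ∈ Finset.range n, ‖a k t‖ ≤ ‖h t‖ := by
  have hQ0 : 0 < Q := E.qc_pos.trans_le hQ
  set b : ℕ → ℝ → ℂ := fun k t => (‖a k t‖ : ℂ)
  have hb : ∀ k, E.mem (b k) := fun k => (mem_norm (ha k)).1
  set S : ℕ → ℝ → ℂ := fun n => ∑ k ∈ Finset.range n, b k
  have hS : ∀ n, E.mem (S n) := fun n => mem_sum hb _
  have hSC : ∀ j n, E.nrm (S (j + n) - S j) ≤ 2 * Q * c * r ^ j := fun j n => by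
    simp only [S, Finset.sum_range_add, add_sub_cancel_left]
    rw [mul_assoc (2 * Q)]
    refine nrm_sum_range_le_of_le_geometric hQ hr hQr (fun k => hb (j + k)) (fun k => ?_) n
    rw [mul_assoc, ← pow_add]
    exact (mem_norm (ha _)).2.trans (hac _)
  obtain ⟨h, hh, hSh⟩ :=
    exists_tendsto_of_nrm_sub_le_geometric hS hr (by nlinarith [E.one_le_qc]) hSC
  refine ⟨h, hh, ?_, ?_⟩
  · calc E.nrm h ≤ E.qc * (2 * Q * c) := nrm_le_of_tendsto hS hh hSh fun n => by
          simpa [S] using hSC 0 n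
      _ ≤ Q * (2 * Q * c) := by
          have hc : 0 ≤ c := by simpa using (E.nrm_nonneg _).trans (hac 0)
          gcongr
      _ = 2 * Q ^ 2 * c := by ring
  · obtain ⟨ns, hns, hae⟩ := (hE _ (fun n => mem_sub (hS n) hh) hSh).exists_seq_tendsto_ae
    filter_upwards [hae] with t ht n
    have hS_norm : ∀ n, ‖S n t‖ = ∑ k ∈ Finset.range n, ‖a k t‖ := fun n => by
      simp only [S, b, Finset.sum_apply, ← Complex.ofReal_sum, Complex.norm_real,
        Real.norm_of_nonneg (Finset.sum_nonneg fun k _ => norm_nonneg (a k t))]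
    have hlim : Tendsto (fun i => ‖S (ns i) t‖) atTop (𝓝 ‖h t‖) := by
      simpa using (ht.add_const (h t)).norm
    refine ge_of_tendsto hlim (eventually_atTop.2 ⟨n, fun i hi => ?_⟩)
    rw [hS_norm]
    exact Finset.sum_le_sum_of_subset_of_nonneg
      (Finset.range_subset_range.2 (hi.trans hns.le_apply)) fun k _ _ => norm_nonneg _

end QBIdealSpace

def IsCalFactor (θ : ℝ) (f x1 x2 : ℝ → ℂ) : Prop :=
  ∀ t, ‖f t‖ = ‖x1 t‖ ^ (1 - θ) * ‖x2 t‖ ^ θ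

lemma IsCalFactor.smul {θ : ℝ} {f x1 x2 : ℝ → ℂ} (h : IsCalFactor θ f x1 x2) (c : ℂ) :
    IsCalFactor θ (c • f) (c • x1) (c • x2) := fun t => by
  simp only [Pi.smul_apply, smul_eq_mul, norm_mul, h t]
  rw [mul_rpow_one_sub_mul_mul_rpow (norm_nonneg c) (norm_nonneg _) (norm_nonneg _)]

section Calderon

variable {m : Measure ℝ} {E1 E2 : QBIdealSpace m} {θ : ℝ}

local notation "CM" => calMem E1.mem E2.mem θ
local notation "CN" => calNrm E1.mem E1.nrm E2.mem E2.nrm θ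

lemma calNrm_nonneg (f : ℝ → ℂ) : 0 ≤ CN f := by
  refine Real.sInf_nonneg fun c ⟨x1, x2, _, _, _, hc⟩ => hc ▸ ?_
  have := E1.nrm_nonneg x1
  have := E2.nrm_nonneg x2
  positivity

lemma calNrm_le {f x1 x2 : ℝ → ℂ} (h1 : E1.mem x1) (h2 : E2.mem x2)
    (hfac : IsCalFactor θ f x1 x2) : CN f ≤ E1.nrm x1 ^ (1 - θ) * E2.nrm x2 ^ θ := by
  refine csInf_le ⟨0, fun c ⟨y1, y2, _, _, _, hc⟩ => hc ▸ ?_⟩ ⟨x1, x2, h1, h2, hfac, rfl⟩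
  have := E1.nrm_nonneg y1
  have := E2.nrm_nonneg y2
  positivity

lemma le_mul_calNrm {f : ℝ → ℂ} (hf : CM f) {K c : ℝ} (hK : 0 ≤ K)
    (h : ∀ x1 x2, E1.mem x1 → E2.mem x2 → IsCalFactor θ f x1 x2 →
      c ≤ K * (E1.nrm x1 ^ (1 - θ) * E2.nrm x2 ^ θ)) :
    c ≤ K * CN f := by
  obtain ⟨-, x1, x2, h1, h2, hfac⟩ := hf
  rcases hK.eq_or_lt with rfl | hK
  · simpa using h x1 x2 h1 h2 hfac
  rw [← div_le_iff₀' hK]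
  refine le_csInf ⟨_, x1, x2, h1, h2, hfac, rfl⟩ fun b ⟨y1, y2, hy1, hy2, hyfac, hb⟩ => ?_
  rw [hb, div_le_iff₀' hK]
  exact h y1 y2 hy1 hy2 hyfac

lemma calNrm_congr {f g : ℝ → ℂ} (h : ∀ t, ‖f t‖ = ‖g t‖) : CN f = CN g := by
  simp only [calNrm, h]

lemma calNrm_sub_comm (f g : ℝ → ℂ) : CN (f - g) = CN (g - f) :=
  calNrm_congr fun t => norm_sub_rev (f t) (g t)

/-- Where `|f| ≤ D := |g₁| ^ (1 - θ) |g₂| ^ θ`, factorize `f` by `((|f| / D) |g₁|, (|f| / D) |g₂|)`,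
which is dominated by `(g₁, g₂)`; on the null set where this fails, factorize by `(|f|, |f|)`. -/
lemma calMem_of_norm_le (hθ0 : 0 < θ) (hθ1 : θ < 1) {f g1 g2 : ℝ → ℂ} (hfm : Measurable f)
    (hg1 : E1.mem g1) (hg2 : E2.mem g2)
    (hdom : ∀ᵐ t ∂m, ‖f t‖ ≤ ‖g1 t‖ ^ (1 - θ) * ‖g2 t‖ ^ θ) :
    CM f ∧ CN f ≤ E1.nrm g1 ^ (1 - θ) * E2.nrm g2 ^ θ := by
  set D : ℝ → ℝ := fun t => ‖g1 t‖ ^ (1 - θ) * ‖g2 t‖ ^ θ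
  set x : (ℝ → ℂ) → ℝ → ℂ := fun g t =>
    ((if ‖f t‖ ≤ D t then ‖f t‖ / D t * ‖g t‖ else ‖f t‖ : ℝ) : ℂ)
  have hD : Measurable D := by
    have := (E1.measurable_of_mem g1 hg1).norm
    have := (E2.measurable_of_mem g2 hg2).norm
    fun_prop
  have hx : ∀ (E : QBIdealSpace m) g, E.mem g → E.mem (x g) ∧ E.nrm (x g) ≤ E.nrm g := by
    intro E g hg
    have hgm := E.measurable_of_mem g hg
    refine E.ideal _ g hg ?_ ?_
    · exact Complex.measurable_ofReal.comp
        (Measurable.ite (measurableSet_le hfm.norm hD) ((hfm.norm.div hD).mul hgm.norm) hfm.norm)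
    · filter_upwards [hdom] with t (ht : ‖f t‖ ≤ D t)
      simp only [x, if_pos ht, Complex.norm_real, Real.norm_eq_abs]
      rw [abs_of_nonneg (by positivity)]
      exact mul_le_of_le_one_left (norm_nonneg _) (div_le_one_of_le₀ ht (by positivity))
  have hfac : IsCalFactor θ f (x g1) (x g2) := fun t => by
    simp only [x, Complex.norm_real, Real.norm_eq_abs]
    split_ifs with ht
    · rw [abs_of_nonneg (by positivity), abs_of_nonneg (by positivity),
        div_mul_rpow_one_sub_mul_div_mul_rpow (norm_nonneg _) (norm_nonneg _) (norm_nonneg _) ht]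
    · rw [abs_norm, rpow_one_sub_mul_rpow_self (norm_nonneg _)]
  obtain ⟨hx1, hx1n⟩ := hx E1 g1 hg1
  obtain ⟨hx2, hx2n⟩ := hx E2 g2 hg2
  refine ⟨⟨hfm, _, _, hx1, hx2, hfac⟩, (calNrm_le hx1 hx2 hfac).trans ?_⟩
  exact rpow_one_sub_mul_rpow_le_of_le hθ0 hθ1 (E1.nrm_nonneg _) (E2.nrm_nonneg _) hx1n hx2n

lemma exists_isCalFactor_nrm_le (hθ0 : 0 < θ) (hθ1 : θ < 1) {f : ℝ → ℂ} (hf : CM f) {ε : ℝ}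
    (hε : 0 < ε) :
    ∃ x1 x2, E1.mem x1 ∧ E2.mem x2 ∧ IsCalFactor θ f x1 x2 ∧
      E1.nrm x1 ≤ CN f + ε ∧ E2.nrm x2 ≤ CN f + ε := by
  obtain ⟨-, y1, y2, hy1, hy2, hyfac⟩ := hf
  obtain ⟨c, ⟨x1, x2, hx1, hx2, hfac, rfl⟩, hlt⟩ := Real.lt_sInf_add_pos
    (s := {c | ∃ x1 x2, E1.mem x1 ∧ E2.mem x2 ∧ IsCalFactor θ f x1 x2 ∧
      c = E1.nrm x1 ^ (1 - θ) * E2.nrm x2 ^ θ}) ⟨_, y1, y2, hy1, hy2, hyfac, rfl⟩ hε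
  obtain ⟨γ, δ, hγ, hδ, hγδ, hγx, hδx⟩ :=
    exists_rescale_le hθ0 hθ1 (E1.nrm_nonneg x1) (E2.nrm_nonneg x2) hlt
  refine ⟨(γ : ℂ) • x1, (δ : ℂ) • x2, E1.smul_mem _ _ hx1, E2.smul_mem _ _ hx2, fun t => ?_, ?_, ?_⟩
  · simp only [Pi.smul_apply, smul_eq_mul, norm_mul, Complex.norm_real, Real.norm_eq_abs,
      abs_of_pos hγ, abs_of_pos hδ, Real.mul_rpow hγ.le (norm_nonneg _),
      Real.mul_rpow hδ.le (norm_nonneg _), hfac t]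
    linear_combination (-(‖x1 t‖ ^ (1 - θ) * ‖x2 t‖ ^ θ)) * hγδ
  · rwa [E1.nrm_smul _ _ hx1, Complex.norm_real, Real.norm_eq_abs, abs_of_pos hγ]
  · rwa [E2.nrm_smul _ _ hx2, Complex.norm_real, Real.norm_eq_abs, abs_of_pos hδ]

lemma calNrm_smul_le (c : ℂ) {f : ℝ → ℂ} (hf : CM f) : CM (c • f) ∧ CN (c • f) ≤ ‖c‖ * CN f := by
  obtain ⟨hfm, x1, x2, hx1, hx2, hfac⟩ := hf
  refine ⟨⟨hfm.const_smul c, _, _, E1.smul_mem c _ hx1, E2.smul_mem c _ hx2,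
    IsCalFactor.smul hfac c⟩, le_mul_calNrm ⟨hfm, x1, x2, hx1, hx2, hfac⟩ (norm_nonneg c)
      fun y1 y2 hy1 hy2 hyfac => ?_⟩
  calc CN (c • f) ≤ E1.nrm (c • y1) ^ (1 - θ) * E2.nrm (c • y2) ^ θ :=
        calNrm_le (E1.smul_mem c _ hy1) (E2.smul_mem c _ hy2) (hyfac.smul c)
    _ = ‖c‖ * (E1.nrm y1 ^ (1 - θ) * E2.nrm y2 ^ θ) := by
        rw [E1.nrm_smul c _ hy1, E2.nrm_smul c _ hy2,
          mul_rpow_one_sub_mul_mul_rpow (norm_nonneg c) (E1.nrm_nonneg _) (E2.nrm_nonneg _)]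

lemma calNrm_smul (c : ℂ) {f : ℝ → ℂ} (hf : CM f) : CN (c • f) = ‖c‖ * CN f := by
  refine le_antisymm (calNrm_smul_le c hf).2 ?_
  rcases eq_or_ne c 0 with rfl | hc
  · simpa using calNrm_nonneg _
  have h := (calNrm_smul_le c⁻¹ (calNrm_smul_le c hf).1).2
  rwa [inv_smul_smul₀ hc, norm_inv, le_inv_mul_iff₀ (norm_pos_iff.2 hc)] at h

lemma calNrm_add_le_add (hθ0 : 0 < θ) (hθ1 : θ < 1) {f g : ℝ → ℂ} (hf : CM f) (hg : CM g)
    {ε : ℝ} (hε : 0 < ε) :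
    CM (f + g) ∧ CN (f + g) ≤ max E1.qc E2.qc * (CN f + CN g + 2 * ε) := by
  have hQ : 0 ≤ max E1.qc E2.qc := E1.qc_pos.le.trans (le_max_left _ _)
  obtain ⟨f1, f2, hf1, hf2, hffac, hf1n, hf2n⟩ := exists_isCalFactor_nrm_le hθ0 hθ1 hf hε
  obtain ⟨g1, g2, hg1, hg2, hgfac, hg1n, hg2n⟩ := exists_isCalFactor_nrm_le hθ0 hθ1 hg hε
  obtain ⟨hv1, hv1n⟩ := QBIdealSpace.mem_norm_add_norm hf1 hg1
  obtain ⟨hv2, hv2n⟩ := QBIdealSpace.mem_norm_add_norm hf2 hg2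
  have hdom : ∀ t, ‖(f + g) t‖ ≤ ‖((‖f1 t‖ + ‖g1 t‖ : ℝ) : ℂ)‖ ^ (1 - θ) *
      ‖((‖f2 t‖ + ‖g2 t‖ : ℝ) : ℂ)‖ ^ θ := fun t => by
    rw [Complex.norm_real, Complex.norm_real, Real.norm_of_nonneg (by positivity),
      Real.norm_of_nonneg (by positivity)]
    calc ‖(f + g) t‖ ≤ ‖f t‖ + ‖g t‖ := norm_add_le _ _
      _ = ‖f1 t‖ ^ (1 - θ) * ‖f2 t‖ ^ θ + ‖g1 t‖ ^ (1 - θ) * ‖g2 t‖ ^ θ := by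
          rw [hffac t, hgfac t]
      _ ≤ _ := rpow_one_sub_mul_rpow_add_le hθ0 hθ1 (norm_nonneg _) (norm_nonneg _)
          (norm_nonneg _) (norm_nonneg _)
  obtain ⟨hmem, hle⟩ := calMem_of_norm_le hθ0 hθ1 (hf.1.add hg.1) hv1 hv2 (ae_of_all _ hdom)
  refine ⟨hmem, hle.trans ?_⟩
  have hs : 0 ≤ CN f + CN g + 2 * ε := by
    linarith [(calNrm_nonneg f : 0 ≤ CN f), (calNrm_nonneg g : 0 ≤ CN g)]
  rw [← rpow_one_sub_mul_rpow_self (θ := θ) (mul_nonneg hQ hs)]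
  refine rpow_one_sub_mul_rpow_le_of_le hθ0 hθ1 (E1.nrm_nonneg _) (E2.nrm_nonneg _) ?_ ?_
  · exact hv1n.trans (mul_le_mul (le_max_left _ _) (by linarith)
      (add_nonneg (E1.nrm_nonneg _) (E1.nrm_nonneg _)) hQ)
  · exact hv2n.trans (mul_le_mul (le_max_right _ _) (by linarith)
      (add_nonneg (E2.nrm_nonneg _) (E2.nrm_nonneg _)) hQ)

lemma calNrm_add_le (hθ0 : 0 < θ) (hθ1 : θ < 1) {f g : ℝ → ℂ} (hf : CM f) (hg : CM g) :
    CM (f + g) ∧ CN (f + g) ≤ max E1.qc E2.qc * (CN f + CN g) := by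
  have hQ : 0 < max E1.qc E2.qc := E1.qc_pos.trans_le (le_max_left _ _)
  refine ⟨(calNrm_add_le_add hθ0 hθ1 hf hg one_pos).1, le_of_forall_pos_le_add fun ε hε => ?_⟩
  calc CN (f + g) ≤ max E1.qc E2.qc * (CN f + CN g + 2 * (ε / (2 * max E1.qc E2.qc))) :=
        (calNrm_add_le_add hθ0 hθ1 hf hg (by positivity)).2
    _ = max E1.qc E2.qc * (CN f + CN g) + ε := by field_simp

lemma calNrm_le_of_norm_le (hθ0 : 0 < θ) (hθ1 : θ < 1) {f g : ℝ → ℂ} (hg : CM g)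
    (hfm : Measurable f) (hle : ∀ᵐ t ∂m, ‖f t‖ ≤ ‖g t‖) : CM f ∧ CN f ≤ CN g := by
  have key : ∀ g1 g2, E1.mem g1 → E2.mem g2 → IsCalFactor θ g g1 g2 →
      CM f ∧ CN f ≤ E1.nrm g1 ^ (1 - θ) * E2.nrm g2 ^ θ := fun g1 g2 hg1 hg2 hgfac =>
    calMem_of_norm_le hθ0 hθ1 hfm hg1 hg2 (by filter_upwards [hle] with t ht; rwa [← hgfac t])
  obtain ⟨hgm, g1, g2, hg1, hg2, hgfac⟩ := hg
  refine ⟨(key g1 g2 hg1 hg2 hgfac).1, ?_⟩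
  simpa using le_mul_calNrm (K := 1) ⟨hgm, g1, g2, hg1, hg2, hgfac⟩ zero_le_one
    fun y1 y2 hy1 hy2 hyfac => by simpa using (key y1 y2 hy1 hy2 hyfac).2

lemma calMem_and_calNrm_eq_zero_of_ae_eq_zero (hθ0 : 0 < θ) (hθ1 : θ < 1) {f : ℝ → ℂ}
    (hfm : Measurable f) (hf0 : f =ᵐ[m] 0) : CM f ∧ CN f = 0 := by
  have h := calMem_of_norm_le (E1 := E1) (E2 := E2) hθ0 hθ1 hfm E1.zero_mem E2.zero_mem
    (by filter_upwards [hf0] with t ht; simp [ht, Real.zero_rpow hθ0.ne'])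
  rw [E1.nrm_zero, E2.nrm_zero, Real.zero_rpow (by linarith), zero_mul] at h
  exact ⟨h.1, le_antisymm h.2 (calNrm_nonneg f)⟩

/-- Factorizations `|f| = |x₁ n| ^ (1 - θ) |x₂ n| ^ θ` with `‖x₁ n‖, ‖x₂ n‖ → 0` force
`x₁ n, x₂ n → 0` in measure, hence a.e. along a common subsequence. -/
lemma ae_eq_zero_of_calNrm_eq_zero (hθ0 : 0 < θ) (hθ1 : θ < 1)
    (hE1 : E1.ContinuouslyEmbedsInL0) (hE2 : E2.ContinuouslyEmbedsInL0) {f : ℝ → ℂ}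
    (hf : CM f) (hf0 : CN f = 0) : f =ᵐ[m] 0 := by
  choose x1 x2 hx1 hx2 hfac hx1n hx2n using fun n : ℕ =>
    exists_isCalFactor_nrm_le hθ0 hθ1 hf (Nat.one_div_pos_of_nat (n := n))
  have htends : ∀ (E : QBIdealSpace m) (x : ℕ → ℝ → ℂ),
      (∀ n, E.nrm (x n) ≤ CN f + 1 / (n + 1)) → Tendsto (fun n => E.nrm (x n)) atTop (𝓝 0) :=
    fun E x hx => tendsto_of_tendsto_of_tendsto_of_le_of_le tendsto_const_nhds
      tendsto_one_div_add_atTop_nhds_zero_nat (fun n => E.nrm_nonneg _)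
      (fun n => by simpa [hf0] using hx n)
  obtain ⟨ns, -, hae⟩ := exists_seq_tendsto_ae_of_tendstoInMeasure_pair
    (hE1 x1 hx1 (htends E1 x1 hx1n)) (hE2 x2 hx2 (htends E2 x2 hx2n))
  filter_upwards [hae] with t ⟨h1, h2⟩
  have hprod : Tendsto (fun i => ‖x1 (ns i) t‖ ^ (1 - θ) * ‖x2 (ns i) t‖ ^ θ) atTop (𝓝 0) := by
    simpa [Real.zero_rpow (sub_pos.2 hθ1).ne', Real.zero_rpow hθ0.ne'] using
      (h1.norm.rpow_const (Or.inr (sub_pos.2 hθ1).le)).mul (h2.norm.rpow_const (Or.inr hθ0.le))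
  have hnorm : ‖f t‖ = 0 :=
    tendsto_nhds_unique (tendsto_const_nhds.congr fun i => hfac (ns i) t) hprod
  simpa using hnorm

lemma calMem_sub (hθ0 : 0 < θ) (hθ1 : θ < 1) {f g : ℝ → ℂ} (hf : CM f) (hg : CM g) :
    CM (f - g) := by
  simpa [sub_eq_add_neg] using (calNrm_add_le hθ0 hθ1 hf (calNrm_smul_le (-1) hg).1).1

/-- The increments `v (k + 1) - v k` factorize through `(a k, b k)` with geometrically small
norms; the embeddings into `L₀` give dominants `h₁ N, h₂ N` of the tails `∑_{k ≥ N} |a k|`,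
`∑_{k ≥ N} |b k|`, and Hölder's inequality dominates `|f - v N|` by
`|h₁ N| ^ (1 - θ) |h₂ N| ^ θ`. -/
lemma exists_calNrm_sub_le_of_calNrm_sub_le_geometric (hθ0 : 0 < θ) (hθ1 : θ < 1)
    (hE1 : E1.ContinuouslyEmbedsInL0) (hE2 : E2.ContinuouslyEmbedsInL0) {r : ℝ} (hr : 0 < r)
    (hQr : max E1.qc E2.qc * r ≤ 1 / 2) {v : ℕ → ℝ → ℂ} (hv : ∀ k, CM (v k))
    (hfast : ∀ k, CN (v (k + 1) - v k) ≤ r ^ k) :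
    ∃ f, ∀ N, CM (f - v N) ∧ CN (f - v N) ≤ 4 * max E1.qc E2.qc ^ 2 * r ^ N := by
  set Q := max E1.qc E2.qc
  choose a b ha hb hfac han hbn using fun k =>
    exists_isCalFactor_nrm_le hθ0 hθ1 (calMem_sub hθ0 hθ1 (hv (k + 1)) (hv k)) (pow_pos hr k)
  have han' : ∀ N k, E1.nrm (a (N + k)) ≤ 2 * r ^ N * r ^ k := fun N k => by
    rw [mul_assoc, ← pow_add]; linarith [han (N + k), hfast (N + k)]
  have hbn' : ∀ N k, E2.nrm (b (N + k)) ≤ 2 * r ^ N * r ^ k := fun N k => by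
    rw [mul_assoc, ← pow_add]; linarith [hbn (N + k), hfast (N + k)]
  choose h1 hh1 hh1n hh1ae using fun N => QBIdealSpace.exists_dominating_of_le_geometric hE1
    (le_max_left _ _) hr.le hQr (fun k => ha (N + k)) (han' N)
  choose h2 hh2 hh2n hh2ae using fun N => QBIdealSpace.exists_dominating_of_le_geometric hE2
    (le_max_right _ _) hr.le hQr (fun k => hb (N + k)) (hbn' N)
  have hH : ∀ᵐ t ∂m, ∀ N n, ∑ k ∈ Finset.range n, ‖v (N + k + 1) t - v (N + k) t‖ ≤
      ‖h1 N t‖ ^ (1 - θ) * ‖h2 N t‖ ^ θ := by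
    filter_upwards [ae_all_iff.2 hh1ae, ae_all_iff.2 hh2ae] with t h1t h2t N n
    calc ∑ k ∈ Finset.range n, ‖v (N + k + 1) t - v (N + k) t‖
        = ∑ k ∈ Finset.range n, ‖a (N + k) t‖ ^ (1 - θ) * ‖b (N + k) t‖ ^ θ :=
          Finset.sum_congr rfl fun k _ => hfac (N + k) t
      _ ≤ (∑ k ∈ Finset.range n, ‖a (N + k) t‖) ^ (1 - θ) *
            (∑ k ∈ Finset.range n, ‖b (N + k) t‖) ^ θ :=
          sum_rpow_one_sub_mul_rpow_le _ hθ0 hθ1 (fun k => norm_nonneg _) fun k => norm_nonneg _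
      _ ≤ ‖h1 N t‖ ^ (1 - θ) * ‖h2 N t‖ ^ θ :=
          rpow_one_sub_mul_rpow_le_of_le hθ0 hθ1 (Finset.sum_nonneg fun k _ => norm_nonneg _)
            (Finset.sum_nonneg fun k _ => norm_nonneg _) (h1t N n) (h2t N n)
  obtain ⟨f, hfm, hfN⟩ := exists_measurable_limit_of_sum_norm_sub_le (fun n => (hv n).1) hH
  refine ⟨f, fun N => ?_⟩
  obtain ⟨hmem, hle⟩ := calMem_of_norm_le hθ0 hθ1 (hfm.sub (hv N).1) (hh1 N) (hh2 N) (hfN N)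
  refine ⟨hmem, hle.trans ?_⟩
  rw [← rpow_one_sub_mul_rpow_self (θ := θ) (by positivity : (0 : ℝ) ≤ 4 * Q ^ 2 * r ^ N)]
  exact rpow_one_sub_mul_rpow_le_of_le hθ0 hθ1 (E1.nrm_nonneg _) (E2.nrm_nonneg _)
    ((hh1n N).trans_eq (by ring)) ((hh2n N).trans_eq (by ring))

lemma calMem_complete (hθ0 : 0 < θ) (hθ1 : θ < 1) (hE1 : E1.ContinuouslyEmbedsInL0)
    (hE2 : E2.ContinuouslyEmbedsInL0) {u : ℕ → ℝ → ℂ} (hu : ∀ n, CM (u n))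
    (hc : ∀ ε : ℝ, 0 < ε → ∃ N : ℕ, ∀ i j, N ≤ i → N ≤ j → CN (u i - u j) < ε) :
    ∃ f, CM f ∧ Tendsto (fun n => CN (u n - f)) atTop (𝓝 0) := by
  set Q := max E1.qc E2.qc
  have hQ : 1 ≤ Q := E1.one_le_qc.trans (le_max_left _ _)
  have hQr : Q * (2 * Q)⁻¹ ≤ 1 / 2 := le_of_eq (by field_simp)
  have hr1 : (2 * Q)⁻¹ < 1 := inv_lt_one_of_one_lt₀ (by linarith)
  refine exists_tendsto_of_cauchy (zero_le_one.trans hQ) (by positivity) hr1 calNrm_nonneg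
    (fun _ _ => calMem_sub hθ0 hθ1) (fun _ _ hx hy => (calNrm_add_le hθ0 hθ1 hx hy).2)
    (fun v hv hfast => ?_) hu hc
  obtain ⟨f, hf⟩ := exists_calNrm_sub_le_of_calNrm_sub_le_geometric hθ0 hθ1 hE1 hE2
    (by positivity) hQr hv hfast
  refine ⟨f, by simpa using (calNrm_add_le hθ0 hθ1 (hf 0).1 (hv 0)).1, ?_⟩
  have hgeom : Tendsto (fun k : ℕ => 4 * Q ^ 2 * (2 * Q)⁻¹ ^ k) atTop (𝓝 0) := by
    simpa using (tendsto_pow_atTop_nhds_zero_of_lt_one (by positivity) hr1).const_mul (4 * Q ^ 2)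
  refine squeeze_zero (fun k => calNrm_nonneg _) (fun k => ?_) hgeom
  rw [calNrm_sub_comm]
  exact (hf k).2

def calderonSpace (hθ0 : 0 < θ) (hθ1 : θ < 1) (hE1 : E1.ContinuouslyEmbedsInL0)
    (hE2 : E2.ContinuouslyEmbedsInL0) : QBIdealSpace m where
  mem := CM
  nrm := CN
  qc := max E1.qc E2.qc
  one_le_qc := E1.one_le_qc.trans (le_max_left _ _)
  measurable_of_mem _ hf := hf.1
  zero_mem :=
    (calMem_and_calNrm_eq_zero_of_ae_eq_zero hθ0 hθ1 measurable_const EventuallyEq.rfl).1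
  add_mem _ _ hf hg := (calNrm_add_le hθ0 hθ1 hf hg).1
  smul_mem c _ hf := (calNrm_smul_le c hf).1
  nrm_nonneg := calNrm_nonneg
  nrm_smul c _ hf := calNrm_smul c hf
  nrm_add_le _ _ hf hg := (calNrm_add_le hθ0 hθ1 hf hg).2
  nrm_eq_zero_iff _ hf := ⟨ae_eq_zero_of_calNrm_eq_zero hθ0 hθ1 hE1 hE2 hf,
    fun h => (calMem_and_calNrm_eq_zero_of_ae_eq_zero hθ0 hθ1 hf.1 h).2⟩
  ideal _ _ hg hfm hle := calNrm_le_of_norm_le hθ0 hθ1 hg hfm hle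
  complete _ hu hc := calMem_complete hθ0 hθ1 hE1 hE2 hu hc

end Calderon

theorem calderon_is_quasi_banach_ideal_space_general
    (α : ℝ≥0∞)
    (E1 E2 : QBIdealSpace (mIoo α))
    (θ : ℝ) (hθ0 : 0 < θ) (hθ1 : θ < 1)
    (hemb1 : ∀ u : ℕ → ℝ → ℂ, (∀ n, E1.mem (u n)) →
      Tendsto (fun n => E1.nrm (u n)) atTop (nhds 0) →
      MeasureTheory.TendstoInMeasure (mIoo α) u atTop 0)
    (hemb2 : ∀ u : ℕ → ℝ → ℂ, (∀ n, E2.mem (u n)) →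
      Tendsto (fun n => E2.nrm (u n)) atTop (nhds 0) →
      MeasureTheory.TendstoInMeasure (mIoo α) u atTop 0) :
    ∃ F : QBIdealSpace (mIoo α),
      (∀ f, F.mem f ↔ calMem E1.mem E2.mem θ f) ∧
      (∀ f, F.mem f → F.nrm f = calNrm E1.mem E1.nrm E2.mem E2.nrm θ f) :=
  ⟨calderonSpace hθ0 hθ1 hemb1 hemb2, fun _ => Iff.rfl, fun _ _ => rfl⟩

/-- If `E₁, E₂` are quasi Banach ideal spaces on `(0,α)` continuously embedded
in `L₀(0,α)` (convergence in measure) and `0 < θ < 1`, then the Calderón space `E₁^{1-θ}E₂^θ`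
is a quasi Banach ideal space on `(0,α)`; in particular it is complete. -/
theorem calderon_is_quasi_banach_ideal_space
    (α : ℝ≥0∞) (hα : 0 < α)
    (E1 E2 : QBIdealSpace (mIoo α))
    (θ : ℝ) (hθ0 : 0 < θ) (hθ1 : θ < 1)
    (hemb1 : ∀ u : ℕ → ℝ → ℂ, (∀ n, E1.mem (u n)) →
      Tendsto (fun n => E1.nrm (u n)) atTop (nhds 0) →
      MeasureTheory.TendstoInMeasure (mIoo α) u atTop 0)
    (hemb2 : ∀ u : ℕ → ℝ → ℂ, (∀ n, E2.mem (u n)) →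
      Tendsto (fun n => E2.nrm (u n)) atTop (nhds 0) →
      MeasureTheory.TendstoInMeasure (mIoo α) u atTop 0) :
    ∃ F : QBIdealSpace (mIoo α),
      (∀ f, F.mem f ↔ calMem E1.mem E2.mem θ f) ∧
      (∀ f, F.mem f → F.nrm f = calNrm E1.mem E1.nrm E2.mem E2.nrm θ f) :=
  calderon_is_quasi_banach_ideal_space_general α E1 E2 θ hθ0 hθ1 hemb1 hemb2
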